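/- arXiv:2312.02291 — 7 statements merged into one kernel-verified Lean document; each statement's English description precedes it below -/
import Mathlib

section
/- Let f : (Fin n → ℝ) → EReal be any function. Then its convex conjugate f* is convex and lower semicontinuous. Moreover, if f is proper (never equal to −∞ and not identically +∞), then f** = f if and only if f is convex and lower semicontinuous. -/
open Matrix

/-- The convex conjugate (Legendre–Fenchel transform) of an `EReal`-valued
function on `ℝⁿ`, with respect to the standard dot product. -/
noncomputable def conj {n : ℕ} (h : (Fin n → ℝ) → EReal) :
    (Fin n → ℝ) → EReal :=
  fun c => ⨆ x : Fin n → ℝ, ((c ⬝ᵥ x : ℝ) : EReal) - h x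

/-- A function into `EReal` is convex if its epigraph is a convex set. -/
def ConvexEReal {E : Type*} [AddCommMonoid E] [Module ℝ E]
    (h : E → EReal) : Prop :=
  Convex ℝ {p : E × ℝ | h p.1 ≤ (p.2 : EReal)}

/-! The conjugate is a supremum of the affine functions `c ↦ ⟪c, x⟫ - f x`, hence convex and lower
semicontinuous, and the Fenchel–Young inequality gives `f** ≤ f`. Since every affine minorant of
`f` also lies below `f**`, the converse inequality for a proper, convex, lower semicontinuous `f`
amounts to finding, below each point of the graph, an affine minorant passing above a given
height. Strict separation of that point from the closed convex epigraph provides a hyperplane; if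
it is vertical, tilting it by a non-vertical hyperplane obtained at a point of the domain of `f`
gives the minorant. -/

namespace EReal

theorem coe_sub_le_comm (a : ℝ) (b c : EReal) : (a : EReal) - b ≤ c ↔ (a : EReal) - c ≤ b := by
  induction b <;> induction c <;> simp [← EReal.coe_sub]
  constructor <;> intro h <;> linarith

theorem continuous_coe_sub_const (e : EReal) : Continuous fun y : ℝ => (y : EReal) - e :=
  continuous_iff_continuousAt.2 fun y =>
    (continuousAt_add (.inl (coe_ne_top y)) (.inl (coe_ne_bot y))).comp
      (continuous_coe_real_ereal.prodMk continuous_const).continuousAt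

end EReal

section Convexity

variable {E : Type*} [AddCommMonoid E] [Module ℝ E]

theorem ConvexEReal.iSup {ι : Sort*} {h : ι → E → EReal} (hh : ∀ i, ConvexEReal (h i)) :
    ConvexEReal fun x => ⨆ i, h i x := by
  simpa only [ConvexEReal, iSup_le_iff, Set.ofPred_forall] using convex_iInter hh

theorem convexEReal_coe_sub_const {E : Type*} [AddCommGroup E] [Module ℝ E] (ℓ : E →ₗ[ℝ] ℝ)
    (e : EReal) :
    ConvexEReal fun x => (ℓ x : EReal) - e := by
  have hlower : IsLowerSet {s : ℝ | (s : EReal) ≤ e} := fun a b hba ha =>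
    (EReal.coe_le_coe_iff.2 hba).trans ha
  have hepi : {p : E × ℝ | (ℓ p.1 : EReal) - e ≤ p.2} =
      ℓ.coprod (-LinearMap.id) ⁻¹' {s | (s : EReal) ≤ e} := by
    ext p
    simp only [Set.mem_ofPred_eq, Set.mem_preimage, LinearMap.coprod_apply, LinearMap.neg_apply,
      LinearMap.id_apply, ← sub_eq_add_neg, EReal.coe_sub]
    exact EReal.coe_sub_le_comm _ _ _
  exact (hepi ▸ hlower.ordConnected.convex.linear_preimage _ :)

end Convexity

section Separation

variable {E : Type*} [TopologicalSpace E] {f : E → EReal}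

theorem LowerSemicontinuous.isClosed_coe_epigraph (hf : LowerSemicontinuous f) :
    IsClosed {p : E × ℝ | f p.1 ≤ (p.2 : EReal)} :=
  hf.isClosed_epigraph.preimage <|
    continuous_fst.prodMk (continuous_coe_real_ereal.comp continuous_snd)

variable [AddCommGroup E] [Module ℝ E]

theorem exists_separation_of_lt [IsTopologicalAddGroup E] [ContinuousSMul ℝ E]
    [LocallyConvexSpace ℝ E] (hconv : ConvexEReal f) (hlsc : LowerSemicontinuous f) {x₀ : E}
    {t : ℝ} (ht : (t : EReal) < f x₀) :
    ∃ (ℓ : StrongDual ℝ E) (s u : ℝ), ℓ x₀ + s * t < u ∧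
      ∀ x (r : ℝ), f x ≤ r → u < ℓ x + s * r := by
  obtain ⟨φ, u, hφ₀, hφ⟩ :=
    geometric_hahn_banach_point_closed hconv hlsc.isClosed_coe_epigraph (x := (x₀, t)) ht.not_ge
  have hφ_apply (x : E) (r : ℝ) : φ (x, r) = φ.comp (.inl ℝ E ℝ) x + φ (0, 1) * r := by
    rw [← φ.comp_inl_add_comp_inr (x, r), mul_comm, ← smul_eq_mul, ← φ.map_smul, Prod.smul_mk,
      smul_zero, smul_eq_mul, mul_one]
    rfl
  refine ⟨φ.comp (.inl ℝ E ℝ), φ (0, 1), u, hφ_apply x₀ t ▸ hφ₀, fun x r hr => ?_⟩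
  exact hφ_apply x r ▸ hφ (x, r) hr

theorem nonneg_slope_of_separation {ℓ : StrongDual ℝ E} {s u : ℝ}
    (hsep : ∀ x (r : ℝ), f x ≤ r → u < ℓ x + s * r) {x₁ : E} (hx₁ : f x₁ ≠ ⊤) : 0 ≤ s := by
  by_contra! hs
  obtain ⟨r₁, hr₁, -⟩ := EReal.exists_between_coe_real hx₁.lt_top
  -- far enough up the epigraph, a negative slope pushes the functional below `u`
  set r := max r₁ ((u - ℓ x₁) / s)
  have hmem : f x₁ ≤ r := hr₁.le.trans (EReal.coe_le_coe_iff.2 (le_max_left _ _))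
  have hr : (u - ℓ x₁) / s ≤ r := le_max_right _ _
  rw [div_le_iff_of_neg hs] at hr
  linarith [hsep x₁ r hmem]

theorem affine_minorant_of_separation {ℓ : StrongDual ℝ E} {s u : ℝ} (hs : 0 < s)
    (hsep : ∀ x (r : ℝ), f x ≤ r → u < ℓ x + s * r) (x : E) :
    (((-s⁻¹ • ℓ) x + u / s : ℝ) : EReal) ≤ f x := by
  refine EReal.le_of_forall_lt_iff_le.1 fun r hr => EReal.coe_le_coe_iff.2 ?_
  have := hsep x r hr.le
  rw [_root_.smul_apply, smul_eq_mul, neg_mul, ← sub_eq_neg_add, ← div_eq_inv_mul,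
    ← sub_div, div_le_iff₀ hs]
  linarith

theorem exists_affine_minorant_gt_of_separation {ℓ : StrongDual ℝ E} {s u : ℝ} (hs : 0 < s)
    {x₀ : E} {t : ℝ} (hx₀ : ℓ x₀ + s * t < u) (hsep : ∀ x (r : ℝ), f x ≤ r → u < ℓ x + s * r) :
    ∃ (g : StrongDual ℝ E) (β : ℝ), (∀ x, ((g x + β : ℝ) : EReal) ≤ f x) ∧ t < g x₀ + β := by
  refine ⟨-s⁻¹ • ℓ, u / s, affine_minorant_of_separation hs hsep, ?_⟩
  rw [_root_.smul_apply, smul_eq_mul, neg_mul, ← sub_eq_neg_add, ← div_eq_inv_mul, ← sub_div,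
    lt_div_iff₀ hs]
  linarith

theorem exists_affine_minorant_gt_of_ne_top [IsTopologicalAddGroup E] [ContinuousSMul ℝ E]
    [LocallyConvexSpace ℝ E] (hconv : ConvexEReal f) (hlsc : LowerSemicontinuous f) {x₀ : E}
    {t : ℝ} (ht : (t : EReal) < f x₀) (hx₀ : f x₀ ≠ ⊤) :
    ∃ (g : StrongDual ℝ E) (β : ℝ), (∀ x, ((g x + β : ℝ) : EReal) ≤ f x) ∧ t < g x₀ + β := by
  obtain ⟨ℓ, s, u, hℓx₀, hsep⟩ := exists_separation_of_lt hconv hlsc ht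
  obtain ⟨r, hr, -⟩ := EReal.exists_between_coe_real hx₀.lt_top
  have htr : t < r := EReal.coe_lt_coe_iff.1 (ht.trans hr)
  have hs : 0 < s := by nlinarith [hsep x₀ r hr.le]
  exact exists_affine_minorant_gt_of_separation hs hℓx₀ hsep

theorem exists_affine_minorant_gt_of_vertical_separation {g₀ : StrongDual ℝ E} {β₀ : ℝ}
    (hg₀ : ∀ x, ((g₀ x + β₀ : ℝ) : EReal) ≤ f x) {ℓ : StrongDual ℝ E} {u : ℝ} {x₀ : E}
    (hx₀ : ℓ x₀ < u) (hsep : ∀ x (r : ℝ), f x ≤ r → u < ℓ x) (t : ℝ) :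
    ∃ (g : StrongDual ℝ E) (β : ℝ), (∀ x, ((g x + β : ℝ) : EReal) ≤ f x) ∧ t < g x₀ + β := by
  -- `u - ℓ` is negative on the domain of `f` and positive at `x₀`, so adding a large multiple of
  -- it to `g₀` keeps a minorant and lifts its value at `x₀` above `t`
  set c := (|t - g₀ x₀ - β₀| + 1) / (u - ℓ x₀)
  have hc : 0 ≤ c := div_nonneg (by positivity) (sub_pos.2 hx₀).le
  have hcx₀ : c * (u - ℓ x₀) = |t - g₀ x₀ - β₀| + 1 := div_mul_cancel₀ _ (sub_pos.2 hx₀).ne'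
  refine ⟨g₀ - c • ℓ, β₀ + c * u, fun x => ?_, ?_⟩
  · refine EReal.le_of_forall_lt_iff_le.1 fun r hr => ?_
    have hu := hsep x r hr.le
    calc (((g₀ - c • ℓ) x + (β₀ + c * u) : ℝ) : EReal)
        = ((g₀ x + β₀ + c * (u - ℓ x) : ℝ) : EReal) := by
          rw [_root_.sub_apply, _root_.smul_apply, smul_eq_mul]
          congr 1; ring
      _ ≤ f x := hg₀ x |>.trans' <| EReal.coe_le_coe_iff.2 <| by nlinarith
      _ ≤ r := hr.le
  · simp only [_root_.sub_apply, _root_.smul_apply, smul_eq_mul]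
    linarith [le_abs_self (t - g₀ x₀ - β₀)]

theorem exists_affine_minorant_gt [IsTopologicalAddGroup E] [ContinuousSMul ℝ E]
    [LocallyConvexSpace ℝ E] (hb : ∀ x, f x ≠ ⊥) (hne : ∃ x, f x ≠ ⊤) (hconv : ConvexEReal f)
    (hlsc : LowerSemicontinuous f) {x₀ : E} {t : ℝ} (ht : (t : EReal) < f x₀) :
    ∃ (g : StrongDual ℝ E) (β : ℝ), (∀ x, ((g x + β : ℝ) : EReal) ≤ f x) ∧ t < g x₀ + β := by
  obtain ⟨x₁, hx₁⟩ := hne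
  obtain ⟨ℓ, s, u, hℓx₀, hsep⟩ := exists_separation_of_lt hconv hlsc ht
  rcases (nonneg_slope_of_separation hsep hx₁).eq_or_lt with rfl | hs
  · obtain ⟨t₁, -, ht₁⟩ := EReal.exists_between_coe_real (bot_lt_iff_ne_bot.2 (hb x₁))
    obtain ⟨g₀, β₀, hg₀, -⟩ := exists_affine_minorant_gt_of_ne_top hconv hlsc ht₁ hx₁
    simp only [zero_mul, add_zero] at hℓx₀ hsep
    exact exists_affine_minorant_gt_of_vertical_separation hg₀ hℓx₀ hsep t
  · exact exists_affine_minorant_gt_of_separation hs hℓx₀ hsep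

end Separation

section Conjugate

variable {n : ℕ}

theorem convexEReal_conj (f : (Fin n → ℝ) → EReal) : ConvexEReal (conj f) :=
  ConvexEReal.iSup fun x => convexEReal_coe_sub_const ((dotProductBilin ℝ ℝ).flip x) (f x)

theorem lowerSemicontinuous_conj (f : (Fin n → ℝ) → EReal) : LowerSemicontinuous (conj f) :=
  lowerSemicontinuous_iSup fun x =>
    ((EReal.continuous_coe_sub_const (f x)).comp
      (continuous_id.dotProduct continuous_const)).lowerSemicontinuous

theorem conj_conj_le (f : (Fin n → ℝ) → EReal) : conj (conj f) ≤ f := fun x =>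
  iSup_le fun c => by
    rw [dotProduct_comm, EReal.coe_sub_le_comm]
    exact le_iSup (fun y => ((c ⬝ᵥ y : ℝ) : EReal) - f y) x

theorem le_conj_conj_of_affine_minorant {f : (Fin n → ℝ) → EReal} {a : Fin n → ℝ} {β : ℝ}
    (h : ∀ x, ((a ⬝ᵥ x + β : ℝ) : EReal) ≤ f x) (x₀ : Fin n → ℝ) :
    ((a ⬝ᵥ x₀ + β : ℝ) : EReal) ≤ conj (conj f) x₀ := by
  have ha : conj f a ≤ ((-β : ℝ) : EReal) := iSup_le fun x => by
    rw [EReal.coe_sub_le_comm, ← EReal.coe_sub, sub_neg_eq_add]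
    exact h x
  calc ((a ⬝ᵥ x₀ + β : ℝ) : EReal) = ((x₀ ⬝ᵥ a : ℝ) : EReal) - ((-β : ℝ) : EReal) := by
        rw [← EReal.coe_sub, dotProduct_comm, sub_neg_eq_add]
    _ ≤ ((x₀ ⬝ᵥ a : ℝ) : EReal) - conj f a := EReal.sub_le_sub le_rfl ha
    _ ≤ conj (conj f) x₀ := le_iSup (fun c => ((x₀ ⬝ᵥ c : ℝ) : EReal) - conj f c) a

theorem le_conj_conj {f : (Fin n → ℝ) → EReal} (hb : ∀ x, f x ≠ ⊥) (hne : ∃ x, f x ≠ ⊤)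
    (hconv : ConvexEReal f) (hlsc : LowerSemicontinuous f) : f ≤ conj (conj f) := fun x₀ =>
  EReal.ge_of_forall_gt_iff_ge.1 fun t ht => by
    obtain ⟨g, β, hg, htg⟩ := exists_affine_minorant_gt hb hne hconv hlsc ht
    obtain ⟨a, ha⟩ := (dotProductEquiv ℝ (Fin n)).surjective g.toLinearMap
    have hga (x : Fin n → ℝ) : g x = a ⬝ᵥ x := (LinearMap.congr_fun ha x).symm
    simp only [hga] at hg htg
    exact (EReal.coe_le_coe_iff.2 htg.le).trans (le_conj_conj_of_affine_minorant hg x₀)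

end Conjugate

/-- The conjugate of any function is convex and lower semicontinuous; and a
proper function equals its biconjugate iff it is convex and lower
semicontinuous. -/
theorem conj_convex_lsc_and_biconj (n : ℕ) (f : (Fin n → ℝ) → EReal) :
    ConvexEReal (conj f) ∧ LowerSemicontinuous (conj f) ∧
      ((∀ x, f x ≠ ⊥) ∧ (∃ x, f x ≠ ⊤) →
        (conj (conj f) = f ↔ ConvexEReal f ∧ LowerSemicontinuous f)) := by
  refine ⟨convexEReal_conj f, lowerSemicontinuous_conj f, fun ⟨hb, hne⟩ => ⟨?_, ?_⟩⟩
  · intro h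
    exact h ▸ ⟨convexEReal_conj _, lowerSemicontinuous_conj _⟩
  · rintro ⟨hconv, hlsc⟩
    exact le_antisymm (conj_conj_le f) (le_conj_conj hb hne hconv hlsc)
end

section
/- Let f : (Fin n → ℝ) → ℝ be a finite convex function (ConvexOn ℝ univ f) and g : (Fin n → ℝ) → ℝ a finite concave function (ConcaveOn ℝ univ g). Then, as extended reals, ⨅ x, ((f x − g x : ℝ) : EReal) = ⨆ c, g*(c) − f*(c), where f*(c) = ⨆ x, ((⟪c,x⟫ − f x : ℝ) : EReal) is the convex conjugate of f and g*(c) = ⨅ x, ((⟪c,x⟫ − g x : ℝ) : EReal) is the concave conjugate of g, and g*(c) − f*(c) is computed in EReal as g*(c) + (−f*(c)). -/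
/-!
Weak duality `g*(c) - f*(c) ≤ f x - g x` is immediate from the definitions. Conversely, if the
real number `m` lies below `inf (f - g)`, then `g + m ≤ f`; the strict epigraph of `f` is open
(a finite convex function is continuous) and convex, and it is disjoint from the convex hypograph
of `g + m`. A hyperplane of `E × ℝ` separating them cannot be vertical, so it is the graph of an
affine function `⟪c, ·⟫ + b` squeezed between `g + m` and `f`, which gives
`g*(c) ≥ m - b` and `f*(c) ≤ -b`.
-/

open Matrix Set

theorem ConvexOn.exists_affine_between {E : Type*} [AddCommGroup E] [Module ℝ E]
    [TopologicalSpace E] [IsTopologicalAddGroup E] [ContinuousSMul ℝ E] {f g : E → ℝ}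
    (hf : ConvexOn ℝ univ f) (hfc : Continuous f) (hg : ConcaveOn ℝ univ g)
    (hgf : ∀ x, g x ≤ f x) :
    ∃ (φ : E →L[ℝ] ℝ) (b : ℝ), ∀ x, g x ≤ φ x + b ∧ φ x + b ≤ f x := by
  have hA : IsOpen {p : E × ℝ | f p.1 < p.2} :=
    isOpen_lt (hfc.comp continuous_fst) continuous_snd
  have hAB : Disjoint {p : E × ℝ | f p.1 < p.2} {p : E × ℝ | p.2 ≤ g p.1} :=
    disjoint_left.2 fun p hpA hpB => (hpB.trans (hgf p.1)).not_gt hpA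
  obtain ⟨ψ, u, hψA, hψB⟩ := geometric_hahn_banach_open
    (by simpa using hf.convex_strict_epigraph) hA (by simpa using hg.convex_hypograph) hAB
  set β := ψ (0, 1)
  have hψ : ∀ x t, ψ (x, t) = ψ (x, 0) + t * β := fun x t => by
    rw [← smul_eq_mul, ← map_smul, ← map_add, Prod.smul_mk, smul_zero, smul_eq_mul, mul_one,
      Prod.mk_add_mk, add_zero, zero_add]
  have hβ : β < 0 := by
    have h1 := hψA (0, f 0 + 1) (by simp)
    have h2 := hψB (0, g 0) (by simp)
    rw [hψ] at h1 h2
    nlinarith [hgf 0]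
  refine ⟨-β⁻¹ • ψ.comp (.inl ℝ E ℝ), u / β, fun x => ?_⟩
  have hφ : (-β⁻¹ • ψ.comp (.inl ℝ E ℝ)) x + u / β = (u - ψ (x, 0)) / β := by
    simp only [_root_.smul_apply, ContinuousLinearMap.comp_apply,
      ContinuousLinearMap.inl_apply, smul_eq_mul]
    field_simp
    ring
  rw [hφ]
  refine ⟨(le_div_iff_of_neg hβ).2 ?_, le_of_forall_gt_imp_ge_of_dense fun t ht => ?_⟩
  · linarith [hψ x (g x), hψB (x, g x) (le_refl (g x))]
  · refine ((div_lt_iff_of_neg hβ).2 ?_).le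
    linarith [hψ x t, hψA (x, t) ht]

theorem LinearMap.apply_eq_dotProduct {ι R : Type*} [Fintype ι] [DecidableEq ι] [CommSemiring R]
    (φ : (ι → R) →ₗ[R] R) (x : ι → R) : φ x = (fun i => φ (Pi.single i 1)) ⬝ᵥ x := by
  conv_lhs => rw [pi_eq_sum_univ' x, map_sum]
  simp [dotProduct, mul_comm]

namespace EReal

theorem iInf_add_neg_iSup_le {ι : Type*} (u w : ι → ℝ) (i : ι) :
    (⨅ j, (u j : EReal)) + -(⨆ j, (w j : EReal)) ≤ ((u i - w i : ℝ) : EReal) := by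
  rw [sub_eq_add_neg, coe_add, coe_neg]
  exact add_le_add (iInf_le _ i) (neg_le_neg_iff.2 (le_iSup (fun j => (w j : EReal)) i))

theorem coe_sub_le_iInf_add_neg_iSup {ι : Type*} {u w : ι → ℝ} {a b : ℝ}
    (hu : ∀ i, a ≤ u i) (hw : ∀ i, w i ≤ b) :
    ((a - b : ℝ) : EReal) ≤ (⨅ i, (u i : EReal)) + -(⨆ i, (w i : EReal)) := by
  rw [sub_eq_add_neg, coe_add, coe_neg]
  exact add_le_add (le_iInf fun i => EReal.coe_le_coe (hu i))
    (neg_le_neg_iff.2 (iSup_le fun i => EReal.coe_le_coe (hw i)))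

end EReal

/-- Fenchel duality for a finite convex function `f` and a finite concave
function `g`: `inf (f - g) = sup (g* - f*)`, computed in the extended reals. -/
theorem fenchel_duality (n : ℕ) (f g : (Fin n → ℝ) → ℝ)
    (hf : ConvexOn ℝ Set.univ f) (hg : ConcaveOn ℝ Set.univ g) :
    (⨅ x : Fin n → ℝ, ((f x - g x : ℝ) : EReal)) =
      ⨆ c : Fin n → ℝ,
        (⨅ x : Fin n → ℝ, ((c ⬝ᵥ x - g x : ℝ) : EReal)) +
          (-(⨆ x : Fin n → ℝ, ((c ⬝ᵥ x - f x : ℝ) : EReal))) := by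
  refine le_antisymm (EReal.ge_of_forall_gt_iff_ge.1 fun m hm => ?_)
    (iSup_le fun c => le_iInf fun x => ?_)
  · have hgf : ∀ x, g x + m ≤ f x := fun x => by
      linarith [EReal.coe_lt_coe_iff.1 (hm.trans_le (iInf_le _ x))]
    obtain ⟨φ, b, hφ⟩ := hf.exists_affine_between (g := fun x => g x + m)
      (continuousOn_univ.1 (hf.continuousOn isOpen_univ)) (hg.add_const m) hgf
    have hc : ∀ x, φ x = (fun i => φ (Pi.single i 1)) ⬝ᵥ x := φ.toLinearMap.apply_eq_dotProduct
    refine le_iSup_of_le (fun i => φ (Pi.single i 1)) ?_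
    calc (m : EReal) = ((m - b - -b : ℝ) : EReal) := by ring_nf
      _ ≤ _ := EReal.coe_sub_le_iInf_add_neg_iSup
        (fun x => by linarith [hc x, (hφ x).1]) (fun x => by linarith [hc x, (hφ x).2])
  · convert EReal.iInf_add_neg_iSup_le _ _ x using 2
    ring
end

section
/- Let A : Matrix (Fin n) (Fin m) ℝ. Then the adjoint of the convex indicator bifunction of A is the concave indicator bifunction of the transpose: for all y* : Fin n → ℝ and x* : Fin m → ℝ, ⨅ x : Fin m → ℝ, ⨅ y : Fin n → ℝ, ([y = A.mulVec x] + ((⟪x*,x⟫ − ⟪y*,y⟫ : ℝ) : EReal)) = −[x* = Aᵀ.mulVec y*]. -/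
open Matrix Classical

/-- The convex indicator of a proposition: `0` if it holds, `+∞` otherwise. -/
noncomputable def ind (P : Prop) : EReal := if P then 0 else ⊤

/-- The adjoint of the convex indicator bifunction of a linear map `A` is the
concave indicator bifunction of the transpose `Aᵀ`. -/
theorem adjoint_indicator_bifunction (m n : ℕ)
    (A : Matrix (Fin n) (Fin m) ℝ) (ys : Fin n → ℝ) (xs : Fin m → ℝ) :
    (⨅ x : Fin m → ℝ, ⨅ y : Fin n → ℝ,
        (ind (y = A.mulVec x) + ((xs ⬝ᵥ x - ys ⬝ᵥ y : ℝ) : EReal))) =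
      -ind (xs = Aᵀ.mulVec ys) := by
  have hinner : ∀ x : Fin m → ℝ,
      (⨅ y : Fin n → ℝ, (ind (y = A.mulVec x) + ((xs ⬝ᵥ x - ys ⬝ᵥ y : ℝ) : EReal)))
        = (((xs - Aᵀ.mulVec ys) ⬝ᵥ x : ℝ) : EReal) := by
    intro x
    apply le_antisymm
    · refine le_trans (iInf_le _ (A.mulVec x)) ?_
      simp [ind, sub_dotProduct, dotProduct_mulVec, mulVec_transpose]
    · refine le_iInf fun y => ?_
      by_cases h : y = A.mulVec x
      · subst h
        simp [ind, sub_dotProduct, dotProduct_mulVec, mulVec_transpose]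
      · simp only [ind, h, if_false]
        rw [show ((xs ⬝ᵥ x - ys ⬝ᵥ y : ℝ) : EReal) = ((xs ⬝ᵥ x - ys ⬝ᵥ y : ℝ) : EReal) from rfl,
          EReal.top_add_coe]
        exact le_top
  rw [iInf_congr hinner]
  set d : Fin m → ℝ := xs - Aᵀ.mulVec ys with hd
  by_cases h : xs = Aᵀ.mulVec ys
  · have hd0 : d = 0 := by simp [hd, h]
    simp [ind, h, hd0]
  · have hdd : (0 : ℝ) < d ⬝ᵥ d := by
      have hne : d ⬝ᵥ d ≠ 0 := by
        intro h0
        rw [dotProduct_self_eq_zero] at h0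
        exact h (by rwa [hd, sub_eq_zero] at h0)
      have hnn : 0 ≤ d ⬝ᵥ d := Finset.sum_nonneg fun i _ => mul_self_nonneg _
      exact lt_of_le_of_ne hnn (Ne.symm hne)
    have hbot : (⨅ x : Fin m → ℝ, ((d ⬝ᵥ x : ℝ) : EReal)) = ⊥ := by
      rw [EReal.eq_bot_iff_forall_lt]
      intro r
      refine lt_of_le_of_lt (iInf_le _ (((r - 1) / (d ⬝ᵥ d)) • d)) ?_
      have : d ⬝ᵥ (((r - 1) / (d ⬝ᵥ d)) • d) = r - 1 := by
        rw [dotProduct_smul, smul_eq_mul, div_mul_cancel₀ _ (ne_of_gt hdd)]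
      rw [this]
      exact_mod_cast sub_one_lt r
    rw [hbot]
    simp [ind, h]
end

section
/- Let R be a linear subspace (Submodule ℝ) of (Fin m → ℝ) × (Fin n → ℝ), and define its twisted orthogonal complement R^c = {(x*,y*) | ∀ (x,y) ∈ R, ⟪x*,x⟫ = ⟪y*,y⟫}. Then the adjoint of the convex indicator bifunction of R is, up to sign, the indicator of R^c: for all x* : Fin m → ℝ and y* : Fin n → ℝ, ⨅ x, ⨅ y, ([(x,y) ∈ R] + ((⟪x*,x⟫ − ⟪y*,y⟫ : ℝ) : EReal)) = (if (x*,y*) ∈ R^c then (0 : EReal) else −∞). -/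
/-! The infimum is that of the linear functional `(x, y) ↦ ⟪x*, x⟫ - ⟪y*, y⟫` over `R`. A linear
functional either vanishes on a subspace, or, by scaling one point where it does not, takes every
real value on it. -/

open Matrix Classical

theorem ind_add_coe (P : Prop) (r : ℝ) : ind P + (r : EReal) = ⨅ _ : P, (r : EReal) := by
  by_cases hP : P <;> simp [ind, hP]

theorem iInf_ind_mem_add_coe {E : Type*} (s : Set E) (g : E → ℝ) :
    ⨅ z, (ind (z ∈ s) + (g z : EReal)) = ⨅ z ∈ s, (g z : EReal) := by
  simp only [ind_add_coe]

theorem LinearMap.exists_mem_submodule_apply_eq {E : Type*} [AddCommGroup E] [Module ℝ E]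
    {R : Submodule ℝ E} (f : E →ₗ[ℝ] ℝ) {z : E} (hz : z ∈ R) (hfz : f z ≠ 0) (r : ℝ) :
    ∃ w ∈ R, f w = r :=
  ⟨(r / f z) • z, R.smul_mem _ hz, by rw [map_smul, smul_eq_mul, div_mul_cancel₀ _ hfz]⟩

theorem LinearMap.biInf_submodule_coe_ereal {E : Type*} [AddCommGroup E] [Module ℝ E]
    (R : Submodule ℝ E) (f : E →ₗ[ℝ] ℝ) :
    ⨅ z ∈ R, (f z : EReal) = if ∀ z ∈ R, f z = 0 then 0 else ⊥ := by
  split_ifs with h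
  · refine le_antisymm ?_ (le_iInf₂ fun z hz => by simp [h z hz])
    exact (biInf_le _ R.zero_mem).trans (by simp)
  · push Not at h
    obtain ⟨z, hz, hfz⟩ := h
    refine (EReal.eq_bot_iff_forall_lt _).2 fun M => ?_
    obtain ⟨w, hw, hfw⟩ := f.exists_mem_submodule_apply_eq hz hfz (M - 1)
    calc ⨅ z ∈ R, (f z : EReal) ≤ f w := biInf_le _ hw
      _ < M := by rw [hfw]; exact_mod_cast sub_one_lt M

/-- The adjoint of the convex indicator bifunction of a linear relation `R` is,
up to sign, the indicator of the twisted orthogonal complement `Rᶜ`. -/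
theorem adjoint_indicator_linear_relation (m n : ℕ)
    (R : Submodule ℝ ((Fin m → ℝ) × (Fin n → ℝ)))
    (xs : Fin m → ℝ) (ys : Fin n → ℝ) :
    (⨅ x : Fin m → ℝ, ⨅ y : Fin n → ℝ,
        (ind ((x, y) ∈ R) + ((xs ⬝ᵥ x - ys ⬝ᵥ y : ℝ) : EReal))) =
      (if (∀ x : Fin m → ℝ, ∀ y : Fin n → ℝ, (x, y) ∈ R → xs ⬝ᵥ x = ys ⬝ᵥ y)
        then (0 : EReal) else ⊥) := by
  set f : (Fin m → ℝ) × (Fin n → ℝ) →ₗ[ℝ] ℝ :=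
    (dotProductBilin ℝ ℝ xs).coprod (-dotProductBilin ℝ ℝ ys)
  have hf : ∀ x y, f (x, y) = xs ⬝ᵥ x - ys ⬝ᵥ y := fun x y => by simp [f, sub_eq_add_neg]
  calc _ = ⨅ z, (ind (z ∈ R) + (f z : EReal)) := by rw [iInf_prod]; simp only [hf]
    _ = ⨅ z ∈ R, (f z : EReal) := iInf_ind_mem_add_coe _ _
    _ = _ := by rw [f.biInf_submodule_coe_ereal]; simp only [Prod.forall, hf, sub_eq_zero]
end

section
/- Let A : Matrix (Fin n) (Fin n) ℝ be symmetric (A.IsSymm). If B and C are both generalized inverses of A (i.e. A * B * A = A and A * C * A = A), then for every y in the range of the linear map x ↦ A.mulVec x, one has ⟪y, B.mulVec y⟫ = ⟪y, C.mulVec y⟫; that is, the value ⟪y, A⁻.mulVec y⟫ does not depend on the choice of generalized inverse A⁻. -/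
open Matrix

/-- For a symmetric matrix `A`, the quadratic value `⟪y, A⁻ y⟫` on the range of
`A` does not depend on the choice of generalized inverse `A⁻`. -/
theorem genInv_quadratic_welldefined (n : ℕ)
    (A : Matrix (Fin n) (Fin n) ℝ) (hA : A.IsSymm)
    (B C : Matrix (Fin n) (Fin n) ℝ)
    (hB : A * B * A = A) (hC : A * C * A = A) :
    ∀ y ∈ LinearMap.range A.mulVecLin,
      y ⬝ᵥ B.mulVec y = y ⬝ᵥ C.mulVec y := by
  rintro y ⟨x, rfl⟩
  have h1 : ∀ w, A.mulVec x ⬝ᵥ w = x ⬝ᵥ A.mulVec w := fun w => by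
    rw [dotProduct_mulVec, ← mulVec_transpose, hA.eq]
  have key : ∀ M : Matrix (Fin n) (Fin n) ℝ, A * M * A = A →
      (A.mulVecLin x) ⬝ᵥ M.mulVec (A.mulVecLin x) = x ⬝ᵥ A.mulVec x := by
    intro M hM
    simp only [mulVecLin_apply, mulVec_mulVec]
    rw [h1, mulVec_mulVec, ← Matrix.mul_assoc, hM]
  rw [key B hB, key C hC]
end

section
/- Functoriality of the cumulant-generating-function embedding of Gaussian morphisms: let A : Matrix (Fin k) (Fin n) ℝ, a : Fin k → ℝ, Σ : Matrix (Fin k) (Fin k) ℝ symmetric positive semidefinite, and B : Matrix (Fin n) (Fin m) ℝ, b : Fin n → ℝ, Ξ : Matrix (Fin n) (Fin n) ℝ symmetric positive semidefinite. Then for all x : Fin m → ℝ and z : Fin k → ℝ, ⨅ y : Fin n → ℝ, ( ((1/2)⟪y, Ξ.mulVec y⟫ + ⟪b,y⟫ : ℝ) + [x = Bᵀ.mulVec y] + ((1/2)⟪z, Σ.mulVec z⟫ + ⟪a,z⟫ : ℝ) + [y = Aᵀ.mulVec z] ) = ((1/2)⟪z, (Σ + A*Ξ*Aᵀ).mulVec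 z⟫ + ⟪a + A.mulVec b, z⟫ : ℝ) + [x = (A*B)ᵀ.mulVec z], where the sums are taken in EReal. -/
open Matrix Classical

/-- Functoriality of the cgf embedding of Gaussian morphisms: the bifunction
composite of the cgf-bifunctions of `(B,b,Ξ)` and `(A,a,Σ)` equals the
cgf-bifunction of the composite Gaussian morphism `(AB, a + Ab, Σ + AΞAᵀ)`. -/
theorem cgf_functorial (m n k : ℕ)
    (A : Matrix (Fin k) (Fin n) ℝ) (a : Fin k → ℝ)
    (S : Matrix (Fin k) (Fin k) ℝ) (hS : S.PosSemidef)
    (B : Matrix (Fin n) (Fin m) ℝ) (b : Fin n → ℝ)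
    (X : Matrix (Fin n) (Fin n) ℝ) (hX : X.PosSemidef)
    (x : Fin m → ℝ) (z : Fin k → ℝ) :
    (⨅ y : Fin n → ℝ,
        (((1 / 2 * (y ⬝ᵥ X.mulVec y) + b ⬝ᵥ y : ℝ) : EReal)
          + ind (x = Bᵀ.mulVec y)
          + ((1 / 2 * (z ⬝ᵥ S.mulVec z) + a ⬝ᵥ z : ℝ) : EReal)
          + ind (y = Aᵀ.mulVec z))) =
      ((1 / 2 * (z ⬝ᵥ (S + A * X * Aᵀ).mulVec z)
          + (a + A.mulVec b) ⬝ᵥ z : ℝ) : EReal)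
        + ind (x = (A * B)ᵀ.mulVec z) := by
  set y₀ : Fin n → ℝ := Aᵀ.mulVec z with hy₀
  have hinf : (⨅ y : Fin n → ℝ,
        (((1 / 2 * (y ⬝ᵥ X.mulVec y) + b ⬝ᵥ y : ℝ) : EReal)
          + ind (x = Bᵀ.mulVec y)
          + ((1 / 2 * (z ⬝ᵥ S.mulVec z) + a ⬝ᵥ z : ℝ) : EReal)
          + ind (y = Aᵀ.mulVec z))) =
      (((1 / 2 * (y₀ ⬝ᵥ X.mulVec y₀) + b ⬝ᵥ y₀ : ℝ) : EReal)
          + ind (x = Bᵀ.mulVec y₀)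
          + ((1 / 2 * (z ⬝ᵥ S.mulVec z) + a ⬝ᵥ z : ℝ) : EReal)
          + ind (y₀ = Aᵀ.mulVec z)) := by
    apply le_antisymm (iInf_le _ y₀)
    refine le_iInf fun y => ?_
    by_cases h : y = Aᵀ.mulVec z
    · subst h; exact le_rfl
    · have ht : ind (y = Aᵀ.mulVec z) = ⊤ := if_neg h
      have hb : (((1 / 2 * (y ⬝ᵥ X.mulVec y) + b ⬝ᵥ y : ℝ) : EReal)
          + ind (x = Bᵀ.mulVec y)
          + ((1 / 2 * (z ⬝ᵥ S.mulVec z) + a ⬝ᵥ z : ℝ) : EReal)) ≠ ⊥ := by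
        unfold ind
        split <;> simp [EReal.add_eq_bot_iff, ← EReal.coe_mul]
      rw [ht, EReal.add_top_of_ne_bot hb]
      exact le_top
  rw [hinf]
  have h0 : ind (y₀ = Aᵀ.mulVec z) = 0 := if_pos rfl
  have hP : (x = Bᵀ.mulVec y₀) = (x = (A * B)ᵀ.mulVec z) := by
    rw [hy₀, transpose_mul, ← mulVec_mulVec]
  have hquad : z ⬝ᵥ (A * X * Aᵀ).mulVec z = y₀ ⬝ᵥ X.mulVec y₀ := by
    rw [← mulVec_mulVec, ← mulVec_mulVec, dotProduct_mulVec, ← mulVec_transpose, hy₀]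
  have hlin : b ⬝ᵥ y₀ = A.mulVec b ⬝ᵥ z := by
    rw [hy₀, dotProduct_mulVec, vecMul_transpose]
  rw [h0, add_zero, hP, ← hquad, hlin]
  have hre : (1 / 2 * (z ⬝ᵥ (A * X * Aᵀ).mulVec z) + A.mulVec b ⬝ᵥ z : ℝ)
      + (1 / 2 * (z ⬝ᵥ S.mulVec z) + a ⬝ᵥ z : ℝ)
      = (1 / 2 * (z ⬝ᵥ (S + A * X * Aᵀ).mulVec z) + (a + A.mulVec b) ⬝ᵥ z : ℝ) := by
    rw [add_mulVec, dotProduct_add, add_dotProduct]; ring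
  calc ((1 / 2 * (z ⬝ᵥ (A * X * Aᵀ).mulVec z) + A.mulVec b ⬝ᵥ z : ℝ) : EReal)
        + ind (x = (A * B)ᵀ.mulVec z)
        + ((1 / 2 * (z ⬝ᵥ S.mulVec z) + a ⬝ᵥ z : ℝ) : EReal)
      = (((1 / 2 * (z ⬝ᵥ (A * X * Aᵀ).mulVec z) + A.mulVec b ⬝ᵥ z : ℝ)
          + (1 / 2 * (z ⬝ᵥ S.mulVec z) + a ⬝ᵥ z : ℝ) : ℝ) : EReal)
          + ind (x = (A * B)ᵀ.mulVec z) := by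
        push_cast
        rw [add_right_comm, add_assoc]
    _ = _ := by rw [hre]
end

section
/- Adjoint of the cgf-bifunction is the logpdf-bifunction (nondegenerate case): let A : Matrix (Fin n) (Fin m) ℝ, μ : Fin n → ℝ, and Σ : Matrix (Fin n) (Fin n) ℝ symmetric positive definite. Then for all x* : Fin m → ℝ and y* : Fin n → ℝ, setting z = y* − A.mulVec x* − μ, the value −(1/2)⟪z, Σ⁻¹.mulVec z⟫ is the least element (IsLeast) of the set {r : ℝ | ∃ y : Fin n → ℝ, r = (1/2)⟪y, Σ.mulVec y⟫ + ⟪μ, y⟫ + ⟪x*, Aᵀ.mulVec y⟫ − ⟪y*, y⟫}. -/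
/-!
Completing the square: after moving `x*` across `Aᵀ`, the objective is the quadratic
`½⟪y, Σ y⟫ - ⟪z, y⟫`, which equals `½⟪y - u, Σ (y - u)⟫ - ½⟪z, u⟫` for `u = Σ⁻¹ z`.
The first term is nonnegative and vanishes at `y = u`.
-/

open Matrix

variable {ι : Type*} [Fintype ι]

theorem Matrix.IsSymm.dotProduct_mulVec_comm {R : Type*} [CommSemiring R] {S : Matrix ι ι R}
    (hS : S.IsSymm) (x y : ι → R) : x ⬝ᵥ S *ᵥ y = y ⬝ᵥ S *ᵥ x := by
  rw [dotProduct_mulVec, ← mulVec_transpose, hS.eq, dotProduct_comm]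

theorem Matrix.IsSymm.half_quadratic_sub_eq {S : Matrix ι ι ℝ} (hS : S.IsSymm) {u c : ι → ℝ}
    (hu : S *ᵥ u = c) (y : ι → ℝ) :
    1 / 2 * (y ⬝ᵥ S *ᵥ y) - c ⬝ᵥ y
      = 1 / 2 * ((y - u) ⬝ᵥ S *ᵥ (y - u)) - 1 / 2 * (c ⬝ᵥ u) := by
  have huy : u ⬝ᵥ S *ᵥ y = c ⬝ᵥ y := by rw [hS.dotProduct_mulVec_comm, hu, dotProduct_comm]
  have hyu : y ⬝ᵥ S *ᵥ u = c ⬝ᵥ y := by rw [hu, dotProduct_comm]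
  have huu : u ⬝ᵥ S *ᵥ u = c ⬝ᵥ u := by rw [hu, dotProduct_comm]
  simp only [mulVec_sub, dotProduct_sub, sub_dotProduct, huy, hyu, huu]
  ring

theorem Matrix.PosSemidef.isLeast_half_quadratic_sub {S : Matrix ι ι ℝ} (hS : S.PosSemidef)
    {u c : ι → ℝ} (hu : S *ᵥ u = c) :
    IsLeast (Set.range fun y ↦ 1 / 2 * (y ⬝ᵥ S *ᵥ y) - c ⬝ᵥ y) (-(1 / 2 * (c ⬝ᵥ u))) := by
  have hsymm : S.IsSymm := isHermitian_iff_isSymm.mp hS.isHermitian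
  refine ⟨⟨u, by dsimp only; rw [hu, dotProduct_comm u c]; ring⟩, ?_⟩
  rintro _ ⟨y, rfl⟩
  have hnonneg : 0 ≤ (y - u) ⬝ᵥ S *ᵥ (y - u) := by
    simpa using hS.dotProduct_mulVec_nonneg (y - u)
  simp only [hsymm.half_quadratic_sub_eq hu]
  linarith

theorem Matrix.PosDef.mulVec_inv_mulVec [DecidableEq ι] {S : Matrix ι ι ℝ} (hS : S.PosDef)
    (c : ι → ℝ) : S *ᵥ S⁻¹ *ᵥ c = c := by
  rw [mulVec_mulVec, mul_nonsing_inv S ((isUnit_iff_isUnit_det S).mp hS.isUnit), one_mulVec]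

/-- Adjoint of the cgf-bifunction is the logpdf-bifunction (nondegenerate
case): the infimum defining the adjoint of the cgf-bifunction of a Gaussian
morphism `(A,μ,Σ)` with `Σ` positive definite is attained at the value
`−(1/2)⟪z, Σ⁻¹ z⟫` where `z = y* − A x* − μ`. -/
theorem cgf_adjoint_logpdf (m n : ℕ)
    (A : Matrix (Fin n) (Fin m) ℝ) (μ : Fin n → ℝ)
    (S : Matrix (Fin n) (Fin n) ℝ) (hS : S.PosDef)
    (xs : Fin m → ℝ) (ys : Fin n → ℝ) :
    IsLeast {r : ℝ | ∃ y : Fin n → ℝ,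
        r = 1 / 2 * (y ⬝ᵥ S.mulVec y) + μ ⬝ᵥ y + xs ⬝ᵥ Aᵀ.mulVec y - ys ⬝ᵥ y}
      (-(1 / 2 *
        ((ys - A.mulVec xs - μ) ⬝ᵥ S⁻¹.mulVec (ys - A.mulVec xs - μ)))) := by
  set z := ys - A *ᵥ xs - μ
  have hobjective : ∀ y : Fin n → ℝ,
      1 / 2 * (y ⬝ᵥ S *ᵥ y) + μ ⬝ᵥ y + xs ⬝ᵥ Aᵀ *ᵥ y - ys ⬝ᵥ y
        = 1 / 2 * (y ⬝ᵥ S *ᵥ y) - z ⬝ᵥ y := by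
    intro y
    rw [dotProduct_mulVec xs, vecMul_transpose]
    simp only [z, sub_dotProduct]
    ring
  convert hS.posSemidef.isLeast_half_quadratic_sub (hS.mulVec_inv_mulVec z) using 1
  ext r
  simp only [hobjective, Set.mem_ofPred_eq, Set.mem_range, eq_comm]
end
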